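/- Boundary-value trace inequality for affine functions on a cut triangle: there exists a constant C, independent of the position of the cut, such that for every triangle K of diameter h_K and every line segment Γ ⊂ K, and every affine function v on K, ‖v‖_{L²(Γ)} ≤ C (h_K^{-1/2}‖v‖_{L²(K)} + h_K^{1/2}‖∇v‖_{L²(K)}). -/

import Mathlib

/-!
A shape-regular triangle `K` contains a disc of radius comparable to `h_K`. On that disc the
constant `|∇v|` and the minimum of `|v|` are controlled by the `L²(K)` norms of `∇v` and `v`, and
since `v` is affine, `|v| ≤ min |v| + h_K |∇v|` on all of `K`. This sup bound on `K` controls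
`v` on any segment `Γ ⊆ K`, whose length is at most `h_K`; the position of `Γ` never enters.
-/

open MeasureTheory Metric
open scoped Interval

theorem sqrt_intervalIntegral_segment_sq_le {E : Type*} [NormedAddCommGroup E] [NormedSpace ℝ E]
    {K : Set E} (hKconv : Convex ℝ K) (hKbdd : Bornology.IsBounded K) {q₁ q₂ : E}
    (hq₁ : q₁ ∈ K) (hq₂ : q₂ ∈ K) {v : E → ℝ} {M : ℝ} (hM : ∀ x ∈ K, |v x| ≤ M) :
    √(∫ t in (0 : ℝ)..1, v (q₁ + t • (q₂ - q₁)) ^ 2 * ‖q₂ - q₁‖) ≤ M * √(diam K) := by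
  have hM0 : 0 ≤ M := (abs_nonneg _).trans (hM q₁ hq₁)
  have hlen : ‖q₂ - q₁‖ ≤ diam K := by
    rw [← dist_eq_norm]
    exact dist_le_diam_of_mem hKbdd hq₂ hq₁
  have hpoint : ∀ t ∈ Ι (0 : ℝ) 1, ‖v (q₁ + t • (q₂ - q₁)) ^ 2 * ‖q₂ - q₁‖‖ ≤ M ^ 2 * diam K := by
    intro t ht
    rw [Set.uIoc_of_le zero_le_one] at ht
    have hmem := hKconv.add_smul_sub_mem hq₁ hq₂ ⟨ht.1.le, ht.2⟩
    rw [norm_mul, norm_pow, Real.norm_eq_abs, norm_norm]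
    gcongr
    exact hM _ hmem
  calc √(∫ t in (0 : ℝ)..1, v (q₁ + t • (q₂ - q₁)) ^ 2 * ‖q₂ - q₁‖)
      ≤ √(M ^ 2 * diam K) := by
        gcongr
        refine (le_abs_self _).trans ?_
        simpa using intervalIntegral.norm_integral_le_of_norm_le_const hpoint
    _ = M * √(diam K) := by rw [Real.sqrt_mul (sq_nonneg M), Real.sqrt_sq hM0]

section Plane

local notation "ℝ²" => EuclideanSpace ℝ (Fin 2)

theorem sq_le_volume_real_closedBall (z : ℝ²) {r : ℝ} (hr : 0 ≤ r) :
    r ^ 2 ≤ volume.real (closedBall z r) := by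
  simp only [Measure.real, EuclideanSpace.volume_closedBall_fin_two, ENNReal.toReal_mul,
    ENNReal.toReal_pow, ENNReal.toReal_ofReal hr, ENNReal.toReal_ofReal Real.pi_pos.le]
  nlinarith [Real.pi_gt_three, sq_nonneg r]

theorem mul_abs_le_sqrt_setIntegral_sq {K : Set ℝ²} (hK : IsCompact K) {z : ℝ²} {r : ℝ}
    (hr : 0 ≤ r) (hball : closedBall z r ⊆ K) {g : ℝ² → ℝ} (hg : Continuous g) {m : ℝ}
    (hm : ∀ x ∈ closedBall z r, |m| ≤ |g x|) :
    r * |m| ≤ √(∫ x in K, g x ^ 2) := by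
  have hint : IntegrableOn (fun x => g x ^ 2) K := (hg.pow 2).continuousOn.integrableOn_compact hK
  have hball_le : m ^ 2 * volume.real (closedBall z r) ≤ ∫ x in closedBall z r, g x ^ 2 :=
    setIntegral_ge_of_const_le_real measurableSet_closedBall measure_closedBall_lt_top.ne
      (fun x hx => sq_le_sq.mpr (hm x hx)) (hint.mono_set hball)
  have hK_le : ∫ x in closedBall z r, g x ^ 2 ≤ ∫ x in K, g x ^ 2 :=
    setIntegral_mono_set hint (.of_forall fun x => sq_nonneg _) hball.eventuallyLE
  rw [← Real.sqrt_sq (by positivity : 0 ≤ r * |m|), mul_pow, sq_abs]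
  gcongr
  calc r ^ 2 * m ^ 2 ≤ m ^ 2 * volume.real (closedBall z r) := by
        rw [mul_comm]; gcongr; exact sq_le_volume_real_closedBall z hr
    _ ≤ ∫ x in K, g x ^ 2 := hball_le.trans hK_le

theorem mul_abs_affine_le_sqrt_setIntegral {K : Set ℝ²} (hK : IsCompact K) {z : ℝ²} {r : ℝ}
    (hr : 0 ≤ r) (hball : closedBall z r ⊆ K) {a : ℝ} {f : ℝ² →L[ℝ] ℝ} {v : ℝ² → ℝ}
    (hv : ∀ x, v x = a + f x) {x : ℝ²} (hx : x ∈ K) :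
    r * |v x| ≤ √(∫ y in K, v y ^ 2) + diam K * √(∫ _ in K, ‖f‖ ^ 2) := by
  have hvc : Continuous v := by
    rw [show v = fun y => a + f y from funext hv]
    fun_prop
  obtain ⟨x₀, hx₀, hmin⟩ := (isCompact_closedBall z r).exists_isMinOn
    ⟨z, mem_closedBall_self hr⟩ (continuous_abs.comp hvc).continuousOn
  have hv₀ : r * |v x₀| ≤ √(∫ y in K, v y ^ 2) :=
    mul_abs_le_sqrt_setIntegral_sq hK hr hball hvc fun y hy => hmin hy
  have hf : r * ‖f‖ ≤ √(∫ _ in K, ‖f‖ ^ 2) := by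
    simpa using mul_abs_le_sqrt_setIntegral_sq (m := ‖f‖) hK hr hball continuous_const
      fun _ _ => le_rfl
  have hvx : |v x| ≤ |v x₀| + ‖f‖ * diam K := by
    have hdiff : v x = v x₀ + f (x - x₀) := by rw [hv, hv, map_sub]; ring
    have hdist : ‖x - x₀‖ ≤ diam K := by
      rw [← dist_eq_norm]; exact dist_le_diam_of_mem hK.isBounded hx (hball hx₀)
    calc |v x| ≤ |v x₀| + |f (x - x₀)| := hdiff ▸ abs_add_le _ _
      _ ≤ |v x₀| + ‖f‖ * diam K := by
        gcongr
        exact (f.le_opNorm _).trans (by gcongr)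
  calc r * |v x| ≤ r * |v x₀| + diam K * (r * ‖f‖) := by
        nlinarith [mul_le_mul_of_nonneg_left hvx hr]
    _ ≤ _ := by gcongr

end Plane

/-- boundary-value trace inequality for affine functions on a cut
triangle: for a shape-regular triangle `K` (containing a ball of radius
`h_K/ρ`) and any line segment `Γ = [q₁, q₂] ⊆ K`, every affine function
`v = a + f` satisfies `‖v‖_{L²(Γ)} ≤ C (h_K^{-1/2} ‖v‖_{L²(K)} +
h_K^{1/2} ‖∇v‖_{L²(K)})` with `C = C(ρ)` independent of the cut. -/
theorem stmt5 (ρ : ℝ) (hρ : 0 < ρ) :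
    ∃ C : ℝ, 0 < C ∧
      ∀ (p₁ p₂ p₃ : EuclideanSpace ℝ (Fin 2)),
        ∀ K : Set (EuclideanSpace ℝ (Fin 2)),
        K = convexHull ℝ {p₁, p₂, p₃} →
        ∀ hK : ℝ, hK = Metric.diam K →
        (∃ z : EuclideanSpace ℝ (Fin 2), Metric.ball z (hK / ρ) ⊆ K) →
        ∀ q₁ q₂ : EuclideanSpace ℝ (Fin 2), q₁ ∈ K → q₂ ∈ K →
        ∀ (a : ℝ) (f : EuclideanSpace ℝ (Fin 2) →L[ℝ] ℝ),
        ∀ v : EuclideanSpace ℝ (Fin 2) → ℝ, (∀ x, v x = a + f x) →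
        Real.sqrt (∫ t in (0 : ℝ)..1, (v (q₁ + t • (q₂ - q₁))) ^ 2 * ‖q₂ - q₁‖) ≤
          C * ((Real.sqrt hK)⁻¹ * Real.sqrt (∫ x in K, (v x) ^ 2)
            + Real.sqrt hK * Real.sqrt (∫ x in K, ‖f‖ ^ 2)) := by
  refine ⟨2 * ρ, by positivity, ?_⟩
  rintro p₁ p₂ p₃ K hK_def hK rfl ⟨z, hz⟩ q₁ q₂ hq₁ hq₂ a f v hv
  have hKc : IsCompact K := hK_def ▸ (Set.toFinite _).isCompact_convexHull (𝕜 := ℝ)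
  have hKconv : Convex ℝ K := hK_def ▸ convex_convexHull ℝ _
  rcases (diam_nonneg (s := K)).eq_or_lt with hdiam | hdiam
  · have hpoint : ∀ x ∈ K, |v x| ≤ |v q₁| := fun x hx => by
      have hdist : dist x q₁ ≤ 0 := hdiam ▸ dist_le_diam_of_mem hKc.isBounded hx hq₁
      rw [dist_le_zero.mp hdist]
    calc _ ≤ |v q₁| * √(diam K) :=
          sqrt_intervalIntegral_segment_sq_le hKconv hKc.isBounded hq₁ hq₂ hpoint
      _ = 0 := by simp [← hdiam]
      _ ≤ _ := by positivity
  · have hr : 0 < diam K / ρ / 2 := by positivity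
    have hball : closedBall z (diam K / ρ / 2) ⊆ K :=
      (closedBall_subset_ball (half_lt_self (by positivity))).trans hz
    have hsup : ∀ x ∈ K, |v x| ≤
        (√(∫ y in K, v y ^ 2) + diam K * √(∫ _ in K, ‖f‖ ^ 2)) / (diam K / ρ / 2) :=
      fun x hx => (le_div_iff₀' hr).mpr <|
        mul_abs_affine_le_sqrt_setIntegral hKc hr.le hball hv hx
    refine (sqrt_intervalIntegral_segment_sq_le hKconv hKc.isBounded hq₁ hq₂ hsup).trans_eq ?_
    have hsq := Real.sq_sqrt hdiam.le
    have hpos := Real.sqrt_pos.mpr hdiam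
    generalize √(diam K) = s at *
    rw [← hsq]
    field_simp
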